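/- If x is an eigenvector of a symmetric real n×n matrix A with eigenvalue λ, and all entries of A lie in [c,b] with 0 < c ≤ b, and all entries of x are positive, then the largest entry of x is at most (b/c) times the smallest entry of x. -/

import Mathlib

/-!
Each row sum `(A x)ᵢ = λ xᵢ` of a nonnegative vector `x` lies between `c ∑ x` and `b ∑ x`, so
`c λ xᵢ ≤ b c ∑ x ≤ b λ xⱼ`; cancelling `λ > 0` gives `c xᵢ ≤ b xⱼ`.
-/

namespace Matrix

variable {R m n : Type*} [CommSemiring R] [PartialOrder R] [IsOrderedRing R] [Fintype n]

theorem mulVec_apply_le_mul_sum {A : Matrix m n R} {x : n → R} {b : R} {i : m}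
    (hA : ∀ j, A i j ≤ b) (hx : ∀ j, 0 ≤ x j) : (A *ᵥ x) i ≤ b * ∑ j, x j := by
  rw [mulVec, dotProduct, Finset.mul_sum]
  exact Finset.sum_le_sum fun j _ => mul_le_mul_of_nonneg_right (hA j) (hx j)

theorem mul_sum_le_mulVec_apply {A : Matrix m n R} {x : n → R} {c : R} {i : m}
    (hA : ∀ j, c ≤ A i j) (hx : ∀ j, 0 ≤ x j) : c * ∑ j, x j ≤ (A *ᵥ x) i := by
  rw [mulVec, dotProduct, Finset.mul_sum]
  exact Finset.sum_le_sum fun j _ => mul_le_mul_of_nonneg_right (hA j) (hx j)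

theorem mul_apply_le_mul_apply_of_mulVec_eq_smul {K ι : Type*} [Field K] [LinearOrder K]
    [IsStrictOrderedRing K] [Fintype ι] {A : Matrix ι ι K} {x : ι → K} {b c lam : K}
    (hc : 0 ≤ c) (hbound : ∀ i j, c ≤ A i j ∧ A i j ≤ b) (hx : ∀ k, 0 ≤ x k) (hlam : 0 < lam)
    (heig : A *ᵥ x = lam • x) (i j : ι) : c * x i ≤ b * x j := by
  have hrow : ∀ k, (A *ᵥ x) k = lam * x k := fun k => by rw [heig, Pi.smul_apply, smul_eq_mul]
  have hb : 0 ≤ b := hc.trans ((hbound j j).1.trans (hbound j j).2)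
  have hup := mulVec_apply_le_mul_sum (fun l => (hbound i l).2) hx
  have hlo := mul_sum_le_mulVec_apply (fun l => (hbound j l).1) hx
  rw [hrow] at hup hlo
  refine le_of_mul_le_mul_left ?_ hlam
  calc lam * (c * x i) = c * (lam * x i) := by ring
    _ ≤ c * (b * ∑ l, x l) := mul_le_mul_of_nonneg_left hup hc
    _ = b * (c * ∑ l, x l) := by ring
    _ ≤ b * (lam * x j) := mul_le_mul_of_nonneg_left hlo hb
    _ = lam * (b * x j) := by ring

end Matrix

theorem positive_eigenvector_entry_ratio_general (n : ℕ) (A : Matrix (Fin n) (Fin n) ℝ)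
    (c b lam : ℝ) (hc : 0 < c)
    (hbound : ∀ i j, c ≤ A i j ∧ A i j ≤ b)
    (x : Fin n → ℝ) (hxpos : ∀ i, 0 < x i) (hlam : 0 < lam)
    (heig : A.mulVec x = lam • x) :
    ∀ i j, x i ≤ (b / c) * x j := by
  intro i j
  rw [div_mul_eq_mul_div, le_div_iff₀ hc, mul_comm]
  exact Matrix.mul_apply_le_mul_apply_of_mulVec_eq_smul hc.le hbound (fun k => (hxpos k).le)
    hlam heig i j

/-- For a positive eigenvector of a symmetric matrix with entries in `[c, b]`,
the largest entry is at most `b / c` times the smallest entry. -/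
theorem positive_eigenvector_entry_ratio (n : ℕ) (A : Matrix (Fin n) (Fin n) ℝ)
    (c b lam : ℝ) (hA : A.IsSymm) (hc : 0 < c) (hcb : c ≤ b)
    (hbound : ∀ i j, c ≤ A i j ∧ A i j ≤ b)
    (x : Fin n → ℝ) (hxpos : ∀ i, 0 < x i) (hlam : 0 < lam)
    (heig : A.mulVec x = lam • x) :
    ∀ i j, x i ≤ (b / c) * x j :=
  positive_eigenvector_entry_ratio_general n A c b lam hc hbound x hxpos hlam heig
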